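/- Let G be a finite group whose Sylow p-subgroup is abelian, and let H be a normal p-subgroup of G. Then N(H ⋊ G/H) ⊆ N(G), where H ⋊ G/H is the semidirect product with respect to the natural conjugation action of G/H on H. -/

import Mathlib

/-!
Common definitions: the set `N(G)` of conjugacy class sizes, `A`-groups,
the largest `p`-power `|G||_p` dividing an element of `N(G)`, the Fitting subgroup,
and the natural conjugation action of `G ⧸ H` on an abelian normal subgroup `H`
(used to form the semidirect product `H ⋊ G/H`).
-/

/-- `N(G)`: the set of conjugacy class sizes (indices of centralizers) of `G`. -/
def indexSet (G : Type*) [Group G] : Set ℕ :=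
  {n | ∃ x : G, n = (Subgroup.centralizer {x}).index}

/-- A finite group is an `A`-group if all its Sylow subgroups are abelian. -/
def IsAGroup (G : Type*) [Group G] : Prop :=
  ∀ (p : ℕ), p.Prime → ∀ P : Sylow p G, ∀ a b : (P : Subgroup G), a * b = b * a

/-- `|G||_p`: the highest power of `p` dividing some element of `N(G)`. -/
noncomputable def maxPPart (G : Type*) [Group G] (p : ℕ) : ℕ :=
  sSup {m | (∃ k : ℕ, m = p ^ k) ∧ ∃ n ∈ indexSet G, m ∣ n}

open scoped Classical in
/-- The natural action of `G ⧸ H` on an abelian normal subgroup `H`, induced by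
conjugation (`h ↦ g * h * g⁻¹`); it is used to form the semidirect product `H ⋊ G/H`.
(Junk value — the trivial action — if `H` is not abelian; see `quotConj_eq` below.) -/
noncomputable def quotConj (G : Type*) [Group G] (H : Subgroup G) [H.Normal] :
    G ⧸ H →* MulAut ↥H :=
  if h : H ≤ (MulAut.conjNormal (H := H)).ker then
    QuotientGroup.lift H MulAut.conjNormal h
  else 1

/-- When `H` is abelian, `quotConj` is indeed the conjugation action `h ↦ g * h * g⁻¹`. -/
theorem quotConj_eq (G : Type*) [Group G] (H : Subgroup G) [H.Normal]
    (hab : ∀ a b : ↥H, a * b = b * a) (g : G) :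
    quotConj G H (g : G ⧸ H) = MulAut.conjNormal g := by
  have hker : H ≤ (MulAut.conjNormal (H := H)).ker := by
    intro x hx
    rw [MonoidHom.mem_ker]
    ext y
    have h2 : x * (y : G) = (y : G) * x := congrArg Subtype.val (hab ⟨x, hx⟩ y)
    simp only [MulAut.conjNormal_apply, MulAut.one_apply]
    rw [mul_inv_eq_iff_eq_mul]
    exact h2
  rw [quotConj, dif_pos hker]
  rfl

/-- The Fitting subgroup: the join of all normal nilpotent subgroups. -/
def fitting (G : Type*) [Group G] : Subgroup G :=
  ⨆ H ∈ {H : Subgroup G | H.Normal ∧ Group.IsNilpotent ↥H}, H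

instance fitting_normal (G : Type*) [Group G] : (fitting G).Normal := by
  constructor
  intro n hn g
  rw [fitting, iSup_subtype'] at hn ⊢
  refine Subgroup.iSup_induction _
    (C := fun x => g * x * g⁻¹ ∈
      ⨆ H : {H : Subgroup G | H.Normal ∧ Group.IsNilpotent ↥H}, (H : Subgroup G))
    hn (fun H x hx => ?_) ?_ (fun x y hx hy => ?_)
  · exact Subgroup.mem_iSup_of_mem H (H.2.1.conj_mem x hx g)
  · simpa using Subgroup.one_mem _
  · have h2 := Subgroup.mul_mem _ hx hy
    have h3 : g * (x * y) * g⁻¹ = (g * x * g⁻¹) * (g * y * g⁻¹) := by group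
    show g * (x * y) * g⁻¹ ∈ _
    rwa [h3]

/-!
Write `R = {⁅h, g⁆ | h ∈ H}`, a subgroup since `H` is abelian. The centralizers of `(a, gH)` in
`H ⋊ G/H` and of `c * g` in `G` (`c ∈ H`) meet `H` in the same subgroup `C_H(g)`, and both project
into `C(gH)`: the coset `uH` lies in the first image iff `a / u(a) ∈ R`, in the second iff
`c / (u(c) ⁅u, g⁆) ∈ R`. So, as `|H ⋊ G/H| = |G|`, the two centralizers have the same index as
soon as `u ↦ ⁅u, g⁆`, a
`1`-cocycle of the preimage `K` of `C(gH)` with values in `H` modulo `R`, is a coboundary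
`u ↦ u(x) / x`; then `c = a / x` works.

The cocycle vanishes on a Sylow `p`-subgroup `S` of `K`: if `m` is the `p'`-part of the order of `g`,
a `p`-element `u ∈ K` commutes with the `p`-element `g ^ m` because Sylow `p`-subgroups are abelian;
hence the norm `∏_{i<m} g^i ⁅u, g⁆ g^{-i}` is trivial, which puts `⁅u, g⁆ ^ m`, and so `⁅u, g⁆`, in `R`.
As `|K : S|` is prime to `p` and `H` is a `p`-group, averaging over `K / S` makes it a coboundary.
-/

open scoped IsMulCommutative commutatorElement

theorem Subgroup.mem_of_pow_mem_of_coprime {A : Type*} [Group A] (R : Subgroup A) {n : ℕ}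
    (hn : (Nat.card A).Coprime n) {c : A} (hc : c ^ n ∈ R) : c ∈ R := by
  obtain ⟨k, hk⟩ := exists_pow_eq_self_of_coprime
    (hn.symm.coprime_dvd_right (_root_.orderOf_dvd_natCard c))
  exact hk ▸ R.pow_mem hc k

theorem mem_range_id_div_of_prod_iterate_eq_one {A : Type*} [CommGroup A] (σ : A →* A) {m : ℕ}
    (hm : (Nat.card A).Coprime m) {c : A} (hc : ∏ i ∈ Finset.range m, σ^[i] c = 1) :
    c ∈ (MonoidHom.id A / σ).range := by
  set R := (MonoidHom.id A / σ).range
  have hdiv : ∀ i, c / σ^[i] c ∈ R := by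
    intro i
    induction i with
    | zero => simp
    | succ i ih =>
      rw [← div_mul_div_cancel _ (σ^[i] c), Function.iterate_succ_apply']
      exact R.mul_mem ih ⟨σ^[i] c, rfl⟩
  refine R.mem_of_pow_mem_of_coprime hm ?_
  have hpow : c ^ m = ∏ i ∈ Finset.range m, c / σ^[i] c := by
    rw [Finset.prod_div_distrib, hc, Finset.prod_const, Finset.card_range, div_one]
  exact hpow ▸ R.prod_mem fun i _ => hdiv i

open groupCohomology in
theorem exists_div_smul_div_mem_of_isMulCocycle₁ {K A : Type*} [Group K] [Finite K] [CommGroup A]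
    [MulDistribMulAction K A] {δ : K → A} (hδ : IsMulCocycle₁ δ) (R : Subgroup A)
    (hR : ∀ k : K, ∀ a ∈ R, k • a ∈ R) (S : Subgroup K) (hS : ∀ s ∈ S, δ s ∈ R)
    (hcop : (Nat.card A).Coprime S.index) :
    ∃ x : A, ∀ k : K, δ k / (k • x / x) ∈ R := by
  classical
  have := Fintype.ofFinite (K ⧸ S)
  set N := ∏ q : K ⧸ S, δ q.out
  have hcard : (Finset.univ : Finset (K ⧸ S)).card = S.index := by
    rw [Finset.card_univ, ← Nat.card_eq_fintype_card, Subgroup.index_eq_card]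
  have key : ∀ k : K, δ k ^ S.index * (k • N / N) ∈ R := by
    intro k
    -- `k * q.out` and `(k • q).out` differ by an element of `S`, on which `δ` vanishes mod `R`
    have hshift : ∀ q : K ⧸ S, δ (k * q.out) / δ (k • q).out ∈ R := by
      intro q
      obtain ⟨s, hs, hks⟩ : ∃ s ∈ S, k * q.out = (k • q).out * s := by
        refine ⟨((k • q).out)⁻¹ * (k * q.out), QuotientGroup.eq.mp ?_, by group⟩
        rw [QuotientGroup.out_eq', ← smul_eq_mul, MulAction.Quotient.mk_smul_out]
      rw [hks, hδ, mul_div_cancel_right]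
      exact hR _ _ (hS s hs)
    have hN : ∏ q : K ⧸ S, δ (k • q).out = N :=
      Fintype.prod_equiv (MulAction.toPerm k) _ _ fun _ => rfl
    have hprod : ∏ q : K ⧸ S, δ (k * q.out) = k • N * δ k ^ S.index := by
      rw [Finset.prod_congr rfl fun q _ => hδ k q.out, Finset.prod_mul_distrib, Finset.prod_const,
        hcard, Finset.smul_prod']
    have := R.prod_mem (t := Finset.univ) fun q _ => hshift q
    rwa [Finset.prod_div_distrib, hprod, hN, mul_comm, mul_div_assoc] at this
  obtain ⟨x, hx⟩ := (powCoprime hcop).surjective N⁻¹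
  rw [powCoprime_apply] at hx
  refine ⟨x, fun k => R.mem_of_pow_mem_of_coprime hcop ?_⟩
  rw [div_pow, div_pow, ← smul_pow', hx, smul_inv', inv_div_inv, div_div_eq_mul_div,
    mul_div_assoc]
  exact key k

theorem Subgroup.card_eq_card_comap_mul_card_map {A E Q : Type*} [Group A] [Group E] [Group Q]
    {ι : A →* E} {π : E →* Q} (hι : Function.Injective ι) (hexact : ι.range = π.ker)
    (C : Subgroup E) : Nat.card C = Nat.card (C.comap ι) * Nat.card (C.map π) := by
  rw [← (π.ker.subgroupOf C).card_mul_index, ← Subgroup.relIndex, Subgroup.relIndex_ker,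
    ← Subgroup.inf_subgroupOf_right, ← hexact, ← Subgroup.map_comap_eq,
    Nat.card_congr (Subgroup.subgroupOfEquivOfLe (Subgroup.map_comap_le _ _)).toEquiv,
    Nat.card_congr ((C.comap ι).equivMapOfInjective ι hι).toEquiv]

theorem isPGroup_zpowers_pow_ordCompl {p : ℕ} {G : Type*} [Group G] [Finite G] (g : G) :
    IsPGroup p (Subgroup.zpowers (g ^ (orderOf g / p ^ (orderOf g).factorization p))) := by
  refine IsPGroup.of_card (n := (orderOf g).factorization p) ?_
  rw [Nat.card_zpowers, orderOf_pow_orderOf_div (orderOf_pos g).ne' (Nat.ordProj_dvd _ _)]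

section AbelianSylow

variable {p : ℕ} {G : Type*} [Group G]

theorem commute_of_mem_isPGroup (hSyl : ∀ P : Sylow p G, ∀ a b : ↥(P : Subgroup G), a * b = b * a)
    {Q : Subgroup G} (hQ : IsPGroup p Q) {z w : G} (hz : z ∈ Q) (hw : w ∈ Q) : Commute z w := by
  obtain ⟨P, hP⟩ := hQ.exists_le_sylow
  exact congrArg Subtype.val (hSyl P ⟨z, hP hz⟩ ⟨w, hP hw⟩)

theorem isMulCommutative_of_isPGroup
    (hSyl : ∀ P : Sylow p G, ∀ a b : ↥(P : Subgroup G), a * b = b * a)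
    {Q : Subgroup G} (hQ : IsPGroup p Q) : IsMulCommutative Q :=
  ⟨⟨fun a b => Subtype.ext (commute_of_mem_isPGroup hSyl hQ a.2 b.2)⟩⟩

theorem commute_of_commute_mk (hSyl : ∀ P : Sylow p G, ∀ a b : ↥(P : Subgroup G), a * b = b * a)
    {H : Subgroup G} [H.Normal] (hH : IsPGroup p H) {z w : G}
    (hz : IsPGroup p (Subgroup.zpowers z)) (hw : IsPGroup p (Subgroup.zpowers w))
    (hzw : Commute (z : G ⧸ H) w) : Commute z w := by
  have hle : Subgroup.zpowers (z : G ⧸ H) ≤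
      Subgroup.normalizer (Subgroup.zpowers (w : G ⧸ H) : Set (G ⧸ H)) := by
    refine le_trans ?_ (Subgroup.centralizer_le_normalizer _)
    rw [Subgroup.le_centralizer_iff, Subgroup.zpowers_le, Subgroup.zpowers_eq_closure,
      Subgroup.centralizer_closure, Subgroup.mem_centralizer_singleton_iff]
    exact hzw.eq.symm
  have hsup := (hz.map (QuotientGroup.mk' H)).to_sup_of_normal_right' (hw.map (QuotientGroup.mk' H))
  rw [MonoidHom.map_zpowers, MonoidHom.map_zpowers] at hsup
  refine commute_of_mem_isPGroup hSyl
    ((hsup hle).comap_of_ker_isPGroup (QuotientGroup.mk' H) (by rwa [QuotientGroup.ker_mk'])) ?_ ?_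
  · exact Subgroup.mem_comap.mpr (Subgroup.mem_sup_left (Subgroup.mem_zpowers _))
  · exact Subgroup.mem_comap.mpr (Subgroup.mem_sup_right (Subgroup.mem_zpowers _))

end AbelianSylow

section NormalSubgroup

variable {G : Type*} [Group G] {H : Subgroup G} [H.Normal]

theorem commutatorElement_mem_iff_commute_mk {u g : G} : ⁅u, g⁆ ∈ H ↔ Commute (u : G ⧸ H) g := by
  rw [← QuotientGroup.eq_one_iff, ← commutatorElement_eq_one_iff_commute]
  rfl

variable (H) in
abbrev centralizerMod (g : G) : Subgroup G :=
  (Subgroup.centralizer {(g : G ⧸ H)}).comap (QuotientGroup.mk' H)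

theorem mem_centralizerMod_iff {u g : G} : u ∈ centralizerMod H g ↔ Commute (u : G ⧸ H) g :=
  Subgroup.mem_centralizer_singleton_iff

theorem commute_mk_of_mem_centralizer {g z : G} (c : H)
    (hz : z ∈ Subgroup.centralizer {(c : G) * g}) : Commute (z : G ⧸ H) g := by
  have := congrArg (QuotientGroup.mk (s := H)) (Subgroup.mem_centralizer_singleton_iff.mp hz)
  simp only [QuotientGroup.mk_mul, (QuotientGroup.eq_one_iff _).mpr c.2, one_mul] at this
  exact this

theorem iterate_conjNormal (g : G) (i : ℕ) (h : H) :
    (MulAut.conjNormal g).toMonoidHom^[i] h = MulAut.conjNormal (g ^ i) h := by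
  induction i with
  | zero => simp
  | succ i ih =>
    rw [Function.iterate_succ_apply', ih, pow_succ', map_mul, MulAut.mul_apply]
    rfl

end NormalSubgroup

section AbelianNormalSubgroup

variable {G : Type*} [Group G] {H : Subgroup G} [H.Normal] [IsMulCommutative H]

variable (H) in
def commutatorHom (g : G) : H →* H := MonoidHom.id H / (MulAut.conjNormal g).toMonoidHom

theorem coe_commutatorHom (g : G) (h : H) : (commutatorHom H g h : G) = ⁅(h : G), g⁆ := by
  simp [commutatorHom, commutatorElement_def, MulAut.conjNormal_apply, div_eq_mul_inv, mul_assoc]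

def commutatorCocycle (g : G) (k : centralizerMod H g) : H :=
  ⟨⁅(k : G), g⁆, commutatorElement_mem_iff_commute_mk.mpr (mem_centralizerMod_iff.mp k.2)⟩

theorem conj_commutatorElement {u g h : G} (hu : ⁅u, g⁆ ∈ H) (hh : h ∈ H) :
    u * ⁅h, g⁆ * u⁻¹ = ⁅u * h * u⁻¹, g⁆ := by
  set h' := u * h * u⁻¹
  set d := ⁅u, g⁆
  have hh' : h' ∈ H := Subgroup.Normal.conj_mem inferInstance h hh u
  have hd : h' * d = d * h' := setLike_mul_comm hh' hu
  have hc : ⁅h', g⁆ * d = d * ⁅h', g⁆ := by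
    refine setLike_mul_comm (commutatorElement_mem_iff_commute_mk.mpr ?_) hu
    rw [(QuotientGroup.eq_one_iff _).mpr hh']
    exact Commute.one_left _
  calc u * ⁅h, g⁆ * u⁻¹ = h' * d * g * h'⁻¹ * g⁻¹ * d⁻¹ := by
        simp only [h', d, commutatorElement_def]; group
    _ = d * ⁅h', g⁆ * d⁻¹ := by rw [hd, commutatorElement_def]; group
    _ = ⁅h', g⁆ := by rw [← hc]; group

theorem conjNormal_commutatorHom {g : G} (k : centralizerMod H g) (h : H) :
    MulAut.conjNormal (k : G) (commutatorHom H g h) =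
      commutatorHom H g (MulAut.conjNormal (k : G) h) := by
  ext
  simp only [MulAut.conjNormal_apply, coe_commutatorHom]
  exact conj_commutatorElement (commutatorCocycle g k).2 h.2

theorem mul_pow_eq_prod_conjNormal_mul_pow (c : H) (g : G) (j : ℕ) :
    ((c : G) * g) ^ j = ((∏ i ∈ Finset.range j, MulAut.conjNormal (g ^ i) c : H) : G) * g ^ j := by
  induction j with
  | zero => simp
  | succ j ih =>
    rw [pow_succ, ih, Finset.prod_range_succ, Subgroup.coe_mul, MulAut.conjNormal_apply]
    group

theorem commutatorCocycle_mem_range {p : ℕ} (hp : p.Prime) [Finite G]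
    (hSyl : ∀ P : Sylow p G, ∀ a b : ↥(P : Subgroup G), a * b = b * a)
    (hH : IsPGroup p H) {g : G} (k : centralizerMod H g)
    (hk : IsPGroup p (Subgroup.zpowers (k : G))) :
    commutatorCocycle g k ∈ (commutatorHom H g).range := by
  have := Fact.mk hp
  set m := orderOf g / p ^ (orderOf g).factorization p
  have hcop : (Nat.card H).Coprime m := by
    obtain ⟨n, hn⟩ := IsPGroup.iff_card.mp hH
    exact hn ▸ (Nat.coprime_ordCompl hp (orderOf_pos g).ne').pow_left n
  have hkg : Commute (k : G) (g ^ m) := by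
    refine commute_of_commute_mk hSyl hH hk (isPGroup_zpowers_pow_ordCompl g) ?_
    rw [QuotientGroup.mk_pow]
    exact (mem_centralizerMod_iff.mp k.2).pow_right m
  have hpow : ((commutatorCocycle g k : G) * g) ^ m = g ^ m := by
    change (⁅(k : G), g⁆ * g) ^ m = g ^ m
    rw [commutatorElement_def, inv_mul_cancel_right, conj_pow, hkg.eq, mul_inv_cancel_right]
  rw [mul_pow_eq_prod_conjNormal_mul_pow, mul_eq_right, OneMemClass.coe_eq_one] at hpow
  refine mem_range_id_div_of_prod_iterate_eq_one _ hcop ?_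
  simpa only [iterate_conjNormal] using hpow

theorem exists_commutatorCocycle_div_mem {p : ℕ} (hp : p.Prime) [Finite G]
    (hSyl : ∀ P : Sylow p G, ∀ a b : ↥(P : Subgroup G), a * b = b * a)
    (hH : IsPGroup p H) (g : G) :
    ∃ x : H, ∀ k : centralizerMod H g,
      commutatorCocycle g k / (MulAut.conjNormal (k : G) x / x) ∈ (commutatorHom H g).range := by
  have := Fact.mk hp
  let _ : MulDistribMulAction (centralizerMod H g) H :=
    MulDistribMulAction.compHom H ((MulAut.conjNormal (H := H)).comp (centralizerMod H g).subtype)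
  obtain ⟨S⟩ : Nonempty (Sylow p (centralizerMod H g)) := inferInstance
  refine exists_div_smul_div_mem_of_isMulCocycle₁ (δ := commutatorCocycle g) ?_ _ ?_ S ?_ ?_
  · intro k l
    ext
    change ⁅(k : G) * l, g⁆ = (k : G) * ⁅(l : G), g⁆ * (k : G)⁻¹ * ⁅(k : G), g⁆
    simp only [commutatorElement_def]
    group
  · rintro k _ ⟨h, rfl⟩
    exact ⟨MulAut.conjNormal (k : G) h, (conjNormal_commutatorHom k h).symm⟩
  · intro s hs
    refine commutatorCocycle_mem_range hp hSyl hH s ?_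
    have := (S.isPGroup'.to_le (Subgroup.zpowers_le.mpr hs)).map (centralizerMod H g).subtype
    rwa [MonoidHom.map_zpowers] at this
  · obtain ⟨n, hn⟩ := IsPGroup.iff_card.mp hH
    exact hn ▸ ((Nat.Prime.coprime_iff_not_dvd hp).mpr S.not_dvd_index).pow_left n

theorem semidirectProduct_mk_mem_centralizer_iff (a b : H) (u g : G) :
    (⟨b, u⟩ : H ⋊[quotConj G H] (G ⧸ H)) ∈ Subgroup.centralizer {⟨a, (g : G ⧸ H)⟩} ↔
      a / MulAut.conjNormal u a = commutatorHom H g b ∧ Commute (u : G ⧸ H) g := by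
  rw [Subgroup.mem_centralizer_singleton_iff, SemidirectProduct.ext_iff]
  simp only [SemidirectProduct.mul_left, SemidirectProduct.mul_right, quotConj_eq G H mul_comm]
  rw [commutatorHom, MonoidHom.div_apply, div_eq_div_iff_mul_eq_mul]
  exact and_congr (by rw [eq_comm]; rfl) Iff.rfl

theorem mul_mem_centralizer_mul_iff {g : G} (k : centralizerMod H g) (c h : H) :
    (k : G) * h ∈ Subgroup.centralizer {(c : G) * g} ↔
      commutatorHom H g (MulAut.conjNormal (k : G) h) =
        c / (MulAut.conjNormal (k : G) c * commutatorCocycle g k) := by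
  have hch : (c : G) * h = h * c := setLike_mul_comm c.2 h.2
  rw [Subgroup.mem_centralizer_singleton_iff, ← conjNormal_commutatorHom, eq_div_iff_mul_eq',
    mul_left_comm, ← Subtype.coe_inj]
  simp only [Subgroup.coe_mul, MulAut.conjNormal_apply, coe_commutatorHom]
  change _ ↔ (k : G) * c * (k : G)⁻¹ * ((k : G) * ⁅(h : G), g⁆ * (k : G)⁻¹ * ⁅(k : G), g⁆) = c
  set z : G := (k : G) * h
  have hconj : (k : G) * c * (k : G)⁻¹ * ((k : G) * ⁅(h : G), g⁆ * (k : G)⁻¹ * ⁅(k : G), g⁆) =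
      z * (c * g) * z⁻¹ * g⁻¹ := by
    calc _ = (k : G) * ((c : G) * h) * g * (h : G)⁻¹ * (k : G)⁻¹ * g⁻¹ := by
          simp only [commutatorElement_def]; group
      _ = z * (c * g) * z⁻¹ * g⁻¹ := by rw [hch]; simp only [z]; group
  rw [hconj, mul_inv_eq_iff_eq_mul, mul_inv_eq_iff_eq_mul]

theorem mem_map_mk_centralizer_iff {g : G} (k : centralizerMod H g) (c : H) :
    ((k : G) : G ⧸ H) ∈ (Subgroup.centralizer {(c : G) * g}).map (QuotientGroup.mk' H) ↔
      c / (MulAut.conjNormal (k : G) c * commutatorCocycle g k) ∈ (commutatorHom H g).range := by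
  simp only [Subgroup.mem_map, QuotientGroup.mk'_apply]
  constructor
  · rintro ⟨z, hz, hzk⟩
    have hh : (k : G)⁻¹ * z ∈ H := QuotientGroup.eq.mp hzk.symm
    rw [← mul_inv_cancel_left (k : G) z] at hz
    exact ⟨_, (mul_mem_centralizer_mul_iff k c ⟨_, hh⟩).mp hz⟩
  · rintro ⟨h', hh'⟩
    refine ⟨k * ((MulAut.conjNormal (k : G)).symm h' : H),
      (mul_mem_centralizer_mul_iff k c _).mpr (by rwa [MulEquiv.apply_symm_apply]), ?_⟩
    rw [QuotientGroup.mk_mul, (QuotientGroup.eq_one_iff _).mpr (Subtype.prop _), mul_one]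

theorem mem_map_rightHom_centralizer_iff (a : H) (u g : G) :
    (u : G ⧸ H) ∈ (Subgroup.centralizer {⟨a, (g : G ⧸ H)⟩} :
        Subgroup (H ⋊[quotConj G H] (G ⧸ H))).map SemidirectProduct.rightHom ↔
      a / MulAut.conjNormal u a ∈ (commutatorHom H g).range ∧ Commute (u : G ⧸ H) g := by
  simp only [Subgroup.mem_map, SemidirectProduct.rightHom_eq_right, MonoidHom.mem_range,
    ← exists_and_right, eq_comm (b := a / _)]
  constructor
  · rintro ⟨⟨b, v⟩, hs, rfl⟩
    exact ⟨b, (semidirectProduct_mk_mem_centralizer_iff a b u g).mp hs⟩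
  · rintro ⟨b, hb⟩
    exact ⟨⟨b, u⟩, (semidirectProduct_mk_mem_centralizer_iff a b u g).mpr hb, rfl⟩

theorem comap_inl_centralizer_eq (a c : H) (g : G) :
    (Subgroup.centralizer {⟨a, (g : G ⧸ H)⟩} : Subgroup (H ⋊[quotConj G H] (G ⧸ H))).comap
        SemidirectProduct.inl =
      (Subgroup.centralizer {(c : G) * g}).comap H.subtype := by
  ext b
  rw [Subgroup.mem_comap, Subgroup.mem_comap,
    show SemidirectProduct.inl b = ⟨b, ((1 : G) : G ⧸ H)⟩ from rfl,
    semidirectProduct_mk_mem_centralizer_iff,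
    show H.subtype b = ((1 : centralizerMod H g) : G) * b from (one_mul _).symm,
    mul_mem_centralizer_mul_iff]
  have : commutatorCocycle (H := H) g 1 = 1 := Subtype.ext (commutatorElement_one_left g)
  simp [this, eq_comm]

theorem map_rightHom_centralizer_eq {a x : H} {g : G}
    (hx : ∀ k : centralizerMod H g,
      commutatorCocycle g k / (MulAut.conjNormal (k : G) x / x) ∈ (commutatorHom H g).range) :
    (Subgroup.centralizer {⟨a, (g : G ⧸ H)⟩} : Subgroup (H ⋊[quotConj G H] (G ⧸ H))).map
        SemidirectProduct.rightHom =
      (Subgroup.centralizer {((a / x : H) : G) * g}).map (QuotientGroup.mk' H) := by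
  ext q
  obtain ⟨u, rfl⟩ := QuotientGroup.mk_surjective q
  rw [mem_map_rightHom_centralizer_iff]
  by_cases hu : Commute (u : G ⧸ H) g
  · set k : centralizerMod H g := ⟨u, mem_centralizerMod_iff.mpr hu⟩
    have hsplit : a / x / (MulAut.conjNormal (k : G) (a / x) * commutatorCocycle g k) =
        a / MulAut.conjNormal (k : G) a *
          (commutatorCocycle g k / (MulAut.conjNormal (k : G) x / x))⁻¹ := by
      rw [map_div]
      simp only [div_eq_mul_inv, mul_inv, inv_inv, mul_assoc, mul_comm, mul_left_comm]
    rw [and_iff_left hu, show (u : G ⧸ H) = ((k : G) : G ⧸ H) from rfl,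
      mem_map_mk_centralizer_iff, hsplit, Subgroup.mul_mem_cancel_right _ (inv_mem (hx k))]
  · simp only [hu, and_false, false_iff, Subgroup.mem_map, QuotientGroup.mk'_apply, not_exists,
      not_and]
    exact fun z hz hzu => hu (hzu ▸ commute_mk_of_mem_centralizer _ hz)

theorem index_centralizer_eq [Finite G] {a x : H} {g : G}
    (hx : ∀ k : centralizerMod H g,
      commutatorCocycle g k / (MulAut.conjNormal (k : G) x / x) ∈ (commutatorHom H g).range) :
    (Subgroup.centralizer {⟨a, (g : G ⧸ H)⟩} : Subgroup (H ⋊[quotConj G H] (G ⧸ H))).index =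
      (Subgroup.centralizer {((a / x : H) : G) * g}).index := by
  set C₁ : Subgroup (H ⋊[quotConj G H] (G ⧸ H)) := Subgroup.centralizer {⟨a, (g : G ⧸ H)⟩}
  set C₂ := Subgroup.centralizer {((a / x : H) : G) * g}
  have hcard : Nat.card C₁ = Nat.card C₂ := by
    rw [Subgroup.card_eq_card_comap_mul_card_map SemidirectProduct.inl_injective
        SemidirectProduct.range_inl_eq_ker_rightHom,
      Subgroup.card_eq_card_comap_mul_card_map (π := QuotientGroup.mk' H) H.subtype_injective
        (by rw [Subgroup.range_subtype, QuotientGroup.ker_mk']),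
      comap_inl_centralizer_eq a (a / x) g, map_rightHom_centralizer_eq hx]
  have hG : Nat.card (H ⋊[quotConj G H] (G ⧸ H)) = Nat.card G := by
    rw [SemidirectProduct.card, mul_comm, ← Subgroup.card_eq_card_quotient_mul_card_subgroup]
  have h₁ := C₁.card_mul_index
  rw [hG, ← C₂.card_mul_index, hcard] at h₁
  exact Nat.eq_of_mul_eq_mul_left Nat.card_pos h₁

end AbelianNormalSubgroup

/-- Let `G` be a finite group whose Sylow `p`-subgroups are abelian and `H`
a normal `p`-subgroup of `G`. Then `N(H ⋊ G/H) ⊆ N(G)` for the natural conjugation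
action of `G/H` on `H` (which is well defined since such an `H` is abelian). -/
theorem stmt_7 (p : ℕ) (hp : p.Prime) (G : Type*) [Group G] [Finite G]
    (hSyl : ∀ P : Sylow p G, ∀ a b : ↥(P : Subgroup G), a * b = b * a)
    (H : Subgroup G) [H.Normal] (hHp : IsPGroup p ↥H) :
    indexSet (SemidirectProduct ↥H (G ⧸ H) (quotConj G H)) ⊆ indexSet G := by
  have := isMulCommutative_of_isPGroup hSyl hHp
  rintro _ ⟨⟨a, q⟩, rfl⟩
  obtain ⟨g, rfl⟩ := QuotientGroup.mk_surjective q
  obtain ⟨x, hx⟩ := exists_commutatorCocycle_div_mem hp hSyl hHp g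
  exact ⟨((a / x : H) : G) * g, index_centralizer_eq hx⟩
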